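/- Let ε > 0 and λ > 0 with √λ ≤ ε. Then for every z ≥ 0 and every initial guess x^{(0)} ≥ 0, the sequence (x^{(k)})_{k≥0} generated by the reweighted ℓ₁ iteration converges, and its limit is the unique element of prox_{λg}(z); that is, the limit is 0 if z ≤ λ/ε and is r₂(z) = (z − ε)/2 + √((z + ε)²/4 − λ) if z > λ/ε. -/

import Mathlib

open Real Filter

/-- The scalar log-sum penalty `g(w) = log(1 + |w|/ε)`. -/
noncomputable def logpen (ε : ℝ) (w : ℝ) : ℝ := Real.log (1 + |w| / ε)

/-- The objective `q_{λ,z}(x) = (1/(2λ))(x − z)² + g(x)`. -/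
noncomputable def qfun (lam ε z x : ℝ) : ℝ :=
  1 / (2 * lam) * (x - z) ^ 2 + logpen ε x

/-- The proximity operator of `λ g` at `z`: the set of global minimizers of `q_{λ,z}`. -/
def prox (lam ε z : ℝ) : Set ℝ := {x | ∀ y : ℝ, qfun lam ε z x ≤ qfun lam ε z y}

/-- `r₁(z) = (z − ε)/2 − √((z + ε)²/4 − λ)`. -/
noncomputable def r1 (lam ε z : ℝ) : ℝ :=
  (z - ε) / 2 - Real.sqrt ((z + ε) ^ 2 / 4 - lam)

/-- `r₂(z) = (z − ε)/2 + √((z + ε)²/4 − λ)`. -/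
noncomputable def r2 (lam ε z : ℝ) : ℝ :=
  (z - ε) / 2 + Real.sqrt ((z + ε) ^ 2 / 4 - lam)

/-- `r(z) = q_{λ,z}(r₂(z)) − q_{λ,z}(0)`. -/
noncomputable def rfun (lam ε z : ℝ) : ℝ :=
  qfun lam ε z (r2 lam ε z) - qfun lam ε z 0

/-- The iteratively reweighted ℓ₁ iteration for `prox_{λ g}(z)`. -/
def IterRW (lam ε z : ℝ) (x : ℕ → ℝ) : Prop :=
  ∀ k : ℕ, x (k + 1) =
    if |z| ≤ lam / (ε + |x k|) then 0
    else Real.sign z * (|z| - lam / (ε + |x k|))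

/-!
On `[0, ∞)` the iteration is `x ↦ T x = max 0 (z − λ/(ε + x))`, a monotone continuous map with
values in `[0, z]`; hence every orbit is monotone and bounded, and converges to a fixed point of
`T`. A positive fixed point is a root of `p(x) = (x − z)(ε + x) + λ`, which is also the numerator
of `q'(x) = p(x) / (λ(ε + x))` for `x > 0`.
If `z ≤ λ/ε`, then `λ ≤ ε²` gives `z ≤ ε` and so `p > 0` on `(0, ∞)`: the only fixed point is `0`
and `q` increases on `[0, ∞)`. If `z > λ/ε`, then `T 0 > 0` and `p = (x − r₁)(x − r₂)` with
`r₁ < 0 < r₂`: the only fixed point is `r₂`, and `q` decreases before `r₂` and increases after it.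
Finally `q(|x|) ≤ q(x)`, strictly for `x < 0` when `z > 0`, so the minimizer over `[0, ∞)` is the
minimizer over `ℝ`.
-/

open Set Function Topology

theorem Monotone.exists_isFixedPt_tendsto_iterate {α : Type*} [ConditionallyCompleteLinearOrder α]
    [TopologicalSpace α] [OrderTopology α] {f : α → α} (hf : Monotone f) (hc : Continuous f)
    (hbelow : BddBelow (range f)) (habove : BddAbove (range f)) (x₀ : α) :
    ∃ L, IsFixedPt f L ∧ Tendsto (fun n => f^[n] x₀) atTop (𝓝 L) := by
  have orbit_subset : range (fun n => f^[n] x₀) ⊆ insert x₀ (range f) := by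
    rintro _ ⟨n, rfl⟩
    cases n with
    | zero => exact mem_insert _ _
    | succ n => exact mem_insert_of_mem _ ⟨f^[n] x₀, (iterate_succ_apply' f n x₀).symm⟩
  obtain ⟨L, hL⟩ : ∃ L, Tendsto (fun n => f^[n] x₀) atTop (𝓝 L) := by
    rcases le_total x₀ (f x₀) with h | h
    · exact ⟨_, tendsto_atTop_ciSup (hf.monotone_iterate_of_le_map h)
        ((habove.insert x₀).mono orbit_subset)⟩
    · exact ⟨_, tendsto_atTop_ciInf (hf.antitone_iterate_of_map_le h)
        ((hbelow.insert x₀).mono orbit_subset)⟩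
  exact ⟨L, isFixedPt_of_tendsto_iterate hL hc.continuousAt, hL⟩

theorem apply_lt_of_deriv_neg_of_deriv_pos {f : ℝ → ℝ} {a c t : ℝ} (hf : ContinuousOn f (Ici a))
    (hneg : ∀ s ∈ Ioo a c, deriv f s < 0) (hpos : ∀ s ∈ Ioi c, 0 < deriv f s)
    (hac : a ≤ c) (hat : a ≤ t) (htc : t ≠ c) : f c < f t := by
  rcases htc.lt_or_gt with htc | htc
  · refine strictAntiOn_of_deriv_neg (convex_Icc a c) (hf.mono Icc_subset_Ici_self) ?_
      ⟨hat, htc.le⟩ ⟨hac, le_rfl⟩ htc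
    simpa only [interior_Icc] using hneg
  · refine strictMonoOn_of_deriv_pos (convex_Ici c) (hf.mono (Ici_subset_Ici.2 hac)) ?_
      (mem_Ici.2 le_rfl) htc.le htc
    simpa only [interior_Ici] using hpos

theorem le_add_sq_div_four_of_lt_mul {a b c : ℝ} (h : a < b * c) : a ≤ (b + c) ^ 2 / 4 := by
  nlinarith [sq_nonneg (b - c)]

variable {lam ε z : ℝ}

/-- The reweighted ℓ₁ step for `z ≥ 0` on `[0, ∞)`; the inner `max t 0` extends it monotonically
and continuously to `ℝ`. -/
noncomputable def rwStep (lam ε z t : ℝ) : ℝ := max 0 (z - lam / (ε + max t 0))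

theorem monotone_rwStep (hε : 0 < ε) (hlam : 0 ≤ lam) : Monotone (rwStep lam ε z) := by
  intro a b hab
  unfold rwStep
  gcongr

theorem continuous_rwStep (hε : 0 < ε) : Continuous (rwStep lam ε z) :=
  continuous_const.max <| continuous_const.sub <|
    continuous_const.div (continuous_const.add (continuous_id.max continuous_const))
      fun t => (add_pos_of_pos_of_nonneg hε (le_max_right t 0)).ne'

theorem rwStep_mem_Icc (hε : 0 < ε) (hlam : 0 ≤ lam) (hz : 0 ≤ z) (t : ℝ) :
    rwStep lam ε z t ∈ Icc 0 z := by
  have : 0 ≤ lam / (ε + max t 0) := div_nonneg hlam (by positivity)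
  exact ⟨le_max_left _ _, max_le hz (by linarith)⟩

theorem iterRW_eq_iterate_rwStep (hε : 0 < ε) (hlam : 0 ≤ lam) (hz : 0 ≤ z) {x : ℕ → ℝ}
    (hx0 : 0 ≤ x 0) (hiter : IterRW lam ε z x) :
    x = fun n => (rwStep lam ε z)^[n] (x 0) := by
  have step : ∀ n, x (n + 1) = max 0 (z - lam / (ε + |x n|)) := by
    intro n
    rw [hiter n, abs_of_nonneg hz]
    split_ifs with h
    · exact (max_eq_left (sub_nonpos.2 h)).symm
    · have hz0 : 0 < z := lt_of_le_of_lt (div_nonneg hlam (by positivity)) (not_le.1 h)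
      rw [Real.sign_of_pos hz0, one_mul, max_eq_right (by linarith)]
  have nonneg : ∀ n, 0 ≤ x n
    | 0 => hx0
    | n + 1 => step n ▸ le_max_left _ _
  funext n
  induction n with
  | zero => rfl
  | succ n ih =>
    rw [iterate_succ_apply', ← ih, step, rwStep, abs_of_nonneg (nonneg n),
      max_eq_left (nonneg n)]

theorem nonneg_of_isFixedPt_rwStep {L : ℝ} (hL : IsFixedPt (rwStep lam ε z) L) : 0 ≤ L :=
  hL ▸ le_max_left _ _

theorem le_div_of_isFixedPt_rwStep_zero (hL : IsFixedPt (rwStep lam ε z) 0) : z ≤ lam / ε := by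
  have : max 0 (z - lam / ε) = 0 := by simpa [IsFixedPt, rwStep] using hL
  linarith [le_max_right 0 (z - lam / ε)]

/-- The numerator of `q'_{λ,z}(t) = critPoly t / (λ (ε + t))` for `t > 0`. -/
def critPoly (lam ε z t : ℝ) : ℝ := (t - z) * (ε + t) + lam

theorem critPoly_eq_zero_of_isFixedPt_rwStep (hε : 0 < ε) {L : ℝ}
    (hL : IsFixedPt (rwStep lam ε z) L) (hpos : 0 < L) : critPoly lam ε z L = 0 := by
  have hL' : max 0 (z - lam / (ε + L)) = L := by
    simpa only [IsFixedPt, rwStep, max_eq_left hpos.le] using hL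
  have hfix : lam = (z - L) * (ε + L) := by
    rcases max_eq_iff.1 hL' with ⟨h, -⟩ | ⟨h, -⟩
    · linarith
    · rw [← div_eq_iff (by linarith)]
      linarith
  unfold critPoly
  linear_combination hfix

theorem critPoly_pos_of_mul_le (hε : 0 < ε) (hle : z * ε ≤ lam) (hlε : lam ≤ ε ^ 2) {t : ℝ}
    (ht : 0 < t) : 0 < critPoly lam ε z t := by
  have hzε : z ≤ ε := by nlinarith
  unfold critPoly
  nlinarith

theorem critPoly_eq_mul (hdisc : lam ≤ (z + ε) ^ 2 / 4) (t : ℝ) :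
    critPoly lam ε z t = (t - r1 lam ε z) * (t - r2 lam ε z) := by
  have hs := Real.sq_sqrt (sub_nonneg.2 hdisc)
  unfold critPoly r1 r2
  linear_combination hs

theorem r1_neg_and_r2_pos (hlt : lam < z * ε) : r1 lam ε z < 0 ∧ 0 < r2 lam ε z := by
  have hs := Real.sq_sqrt (sub_nonneg.2 (le_add_sq_div_four_of_lt_mul hlt))
  have hle : r1 lam ε z ≤ r2 lam ε z := by
    unfold r1 r2
    linarith [Real.sqrt_nonneg ((z + ε) ^ 2 / 4 - lam)]
  have hprod : r1 lam ε z * r2 lam ε z = lam - z * ε := by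
    unfold r1 r2
    linear_combination -hs
  constructor <;> nlinarith

theorem eq_zero_of_isFixedPt_rwStep (hε : 0 < ε) (hle : z * ε ≤ lam) (hlε : lam ≤ ε ^ 2) {L : ℝ}
    (hL : IsFixedPt (rwStep lam ε z) L) : L = 0 := by
  by_contra hne
  have hpos := (nonneg_of_isFixedPt_rwStep hL).lt_of_ne' hne
  exact (critPoly_pos_of_mul_le hε hle hlε hpos).ne' (critPoly_eq_zero_of_isFixedPt_rwStep hε hL hpos)

theorem eq_r2_of_isFixedPt_rwStep (hε : 0 < ε) (hlt : lam < z * ε) {L : ℝ}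
    (hL : IsFixedPt (rwStep lam ε z) L) : L = r2 lam ε z := by
  rcases (nonneg_of_isFixedPt_rwStep hL).eq_or_lt with h0 | hpos
  · subst h0
    have := le_div_of_isFixedPt_rwStep_zero hL
    rw [le_div_iff₀ hε] at this
    linarith
  · have hroot := critPoly_eq_zero_of_isFixedPt_rwStep hε hL hpos
    rw [critPoly_eq_mul (le_add_sq_div_four_of_lt_mul hlt)] at hroot
    have hr1 := (r1_neg_and_r2_pos hlt).1
    rcases mul_eq_zero.1 hroot with h | h <;> linarith

theorem continuous_qfun (hε : 0 < ε) : Continuous (qfun lam ε z) := by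
  unfold qfun logpen
  exact (continuous_const.mul ((continuous_id.sub continuous_const).pow 2)).add <|
    (continuous_const.add (continuous_abs.div_const ε)).log
      fun t => (by positivity : (0 : ℝ) < 1 + |t| / ε).ne'

theorem hasDerivAt_qfun (hε : 0 < ε) (hlam : 0 < lam) {t : ℝ} (ht : 0 < t) :
    HasDerivAt (qfun lam ε z) (critPoly lam ε z t / (lam * (ε + t))) t := by
  have hpen : HasDerivAt (fun s => 1 + |s| / ε) (1 / ε) t := by
    simpa using ((hasDerivAt_abs_pos ht).div_const ε).const_add 1
  have hsq : HasDerivAt (fun s => 1 / (2 * lam) * (s - z) ^ 2)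
      (1 / (2 * lam) * (2 * (t - z))) t := by
    simpa using (((hasDerivAt_id t).sub_const z).pow 2).const_mul (1 / (2 * lam))
  refine (hsq.add (hpen.log (by positivity))).congr_deriv ?_
  rw [abs_of_pos ht, critPoly]
  field_simp

theorem qfun_lt_of_critPoly_sign (hε : 0 < ε) (hlam : 0 < lam) {c : ℝ} (hc : 0 ≤ c)
    (hneg : ∀ t ∈ Ioo 0 c, critPoly lam ε z t < 0) (hpos : ∀ t ∈ Ioi c, 0 < critPoly lam ε z t)
    {t : ℝ} (ht : 0 ≤ t) (htc : t ≠ c) : qfun lam ε z c < qfun lam ε z t := by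
  refine apply_lt_of_deriv_neg_of_deriv_pos (continuous_qfun hε).continuousOn
    (fun s hs => ?_) (fun s hs => ?_) hc ht htc
  · have hs0 : 0 < s := hs.1
    rw [(hasDerivAt_qfun hε hlam hs0).deriv]
    exact div_neg_of_neg_of_pos (hneg s hs) (by positivity)
  · have hs0 : 0 < s := hc.trans_lt hs
    rw [(hasDerivAt_qfun hε hlam hs0).deriv]
    exact div_pos (hpos s hs) (by positivity)

theorem qfun_abs_le (hlam : 0 ≤ lam) (hz : 0 ≤ z) (t : ℝ) :
    qfun lam ε z |t| ≤ qfun lam ε z t := by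
  unfold qfun logpen
  rw [abs_abs]
  have : (|t| - z) ^ 2 ≤ (t - z) ^ 2 := by
    nlinarith [sq_abs t, mul_le_mul_of_nonneg_left (le_abs_self t) hz]
  gcongr

theorem qfun_abs_lt (hlam : 0 < lam) (hz : 0 < z) {t : ℝ} (ht : t < 0) :
    qfun lam ε z |t| < qfun lam ε z t := by
  unfold qfun logpen
  rw [abs_abs, abs_of_neg ht]
  have : (-t - z) ^ 2 < (t - z) ^ 2 := by nlinarith
  gcongr

theorem prox_eq_singleton_of_critPoly_sign (hε : 0 < ε) (hlam : 0 < lam) (hz : 0 ≤ z) {c : ℝ}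
    (hc : 0 ≤ c) (hcz : c = 0 ∨ 0 < z) (hneg : ∀ t ∈ Ioo 0 c, critPoly lam ε z t < 0)
    (hpos : ∀ t ∈ Ioi c, 0 < critPoly lam ε z t) : prox lam ε z = {c} := by
  have hmin : ∀ w, w ≠ c → qfun lam ε z c < qfun lam ε z w := by
    intro w hwc
    by_cases habs : |w| = c
    · have hw : w < 0 := by
        by_contra! hw
        exact hwc (abs_of_nonneg hw ▸ habs)
      have hz0 : 0 < z := hcz.resolve_left fun h => hwc (abs_eq_zero.1 (habs.trans h) ▸ h.symm)
      exact habs ▸ qfun_abs_lt hlam hz0 hw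
    · exact (qfun_lt_of_critPoly_sign hε hlam hc hneg hpos (abs_nonneg w) habs).trans_le
        (qfun_abs_le hlam.le hz w)
  refine eq_singleton_iff_unique_mem.2 ⟨fun y => ?_, fun w hw => ?_⟩
  · rcases eq_or_ne y c with rfl | hyc
    · exact le_rfl
    · exact (hmin y hyc).le
  · by_contra hwc
    exact (hw c).not_gt (hmin w hwc)

/-- for `√λ ≤ ε`, the reweighted ℓ₁ iteration always converges to
the unique element of `prox_{λg}(z)`. -/
theorem iterRW_accurate_sqrt_le (ε lam : ℝ) (hε : 0 < ε) (hlam : 0 < lam)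
    (h : Real.sqrt lam ≤ ε) (z : ℝ) (hz : 0 ≤ z)
    (x : ℕ → ℝ) (hx0 : 0 ≤ x 0) (hiter : IterRW lam ε z x) :
    (z ≤ lam / ε →
      Filter.Tendsto x Filter.atTop (nhds 0) ∧ prox lam ε z = {0}) ∧
    (lam / ε < z →
      Filter.Tendsto x Filter.atTop (nhds (r2 lam ε z)) ∧
      prox lam ε z = {r2 lam ε z}) := by
  have hlε : lam ≤ ε ^ 2 := (Real.sqrt_le_left hε.le).1 h
  have hrange := rwStep_mem_Icc (lam := lam) (z := z) hε hlam.le hz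
  obtain ⟨L, hfix, hlim⟩ := (monotone_rwStep hε hlam.le).exists_isFixedPt_tendsto_iterate
    (continuous_rwStep hε) ⟨0, forall_mem_range.2 fun t => (hrange t).1⟩
    ⟨z, forall_mem_range.2 fun t => (hrange t).2⟩ (x 0)
  rw [← iterRW_eq_iterate_rwStep hε hlam.le hz hx0 hiter] at hlim
  refine ⟨fun hcase => ?_, fun hcase => ?_⟩
  · have hle : z * ε ≤ lam := (le_div_iff₀ hε).1 hcase
    refine ⟨eq_zero_of_isFixedPt_rwStep hε hle hlε hfix ▸ hlim,
      prox_eq_singleton_of_critPoly_sign hε hlam hz le_rfl (Or.inl rfl) ?_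
        fun t ht => critPoly_pos_of_mul_le hε hle hlε ht⟩
    simp
  · have hlt : lam < z * ε := (div_lt_iff₀ hε).1 hcase
    obtain ⟨hr1, hr2⟩ := r1_neg_and_r2_pos hlt
    have hdisc := le_add_sq_div_four_of_lt_mul hlt
    refine ⟨eq_r2_of_isFixedPt_rwStep hε hlt hfix ▸ hlim,
      prox_eq_singleton_of_critPoly_sign hε hlam hz hr2.le (Or.inr (by nlinarith))
        (fun t ht => ?_) (fun t ht => ?_)⟩
    · rw [critPoly_eq_mul hdisc]
      exact mul_neg_of_pos_of_neg (by linarith [ht.1]) (by linarith [ht.2])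
    · rw [critPoly_eq_mul hdisc]
      exact mul_pos (by linarith [mem_Ioi.1 ht]) (by linarith [mem_Ioi.1 ht])
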